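/- arXiv:2505.18648 — 3 statements merged into one kernel-verified Lean document; each statement's English description precedes it below -/
import Mathlib

section
/- Let τ : V → (ℕ ∪ {∞}) × ℕ assign timestamps to operations, ordered lexicographically with ∞ greater than every natural number. Suppose: (a) every edge (o₁, o₂) of G satisfies τ(o₁) ≤ τ(o₂); (b) every edge (o, o') with o' a write satisfies τ(o) < τ(o'); and (c) the rt relation restricted to reads is a strict partial order (irreflexive and transitive with no two reads each preceding the other). Then G has no directed cycle. -/
/-- If `τ` is non-decreasing along every edge, strictly increasing into writes,
every `wr`-edge originates at a write and every `ww`/`rw`-edge targets a write,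
and the real-time relation restricted to reads is a strict partial order,
then the dependency graph has no directed cycle. -/
theorem stmt_7 {V : Type*} (rt wr ww rw : V → V → Prop) (isWrite : V → Prop)
    (E : V → V → Prop) (hE : ∀ a b, E a b ↔ rt a b ∨ wr a b ∨ ww a b ∨ rw a b)
    (τ : V → Lex (WithTop ℕ × ℕ))
    (ha : ∀ a b, E a b → τ a ≤ τ b)
    (hb : ∀ a b, E a b → isWrite b → τ a < τ b)
    (hwr : ∀ a b, wr a b → isWrite a)
    (hww : ∀ a b, ww a b → isWrite b)
    (hrw : ∀ a b, rw a b → isWrite b)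
    (hcIrr : ∀ a, ¬ (rt a a ∧ ¬ isWrite a))
    (hcTrans : ∀ a b c, ¬ isWrite a → ¬ isWrite b → ¬ isWrite c →
      rt a b → rt b c → rt a c)
    (hcAsymm : ∀ a b, ¬ isWrite a → ¬ isWrite b → rt a b → ¬ rt b a) :
    ∀ v, ¬ Relation.TransGen E v v := by
  -- monotonicity of τ along paths
  have mono : ∀ a b, Relation.TransGen E a b → τ a ≤ τ b := by
    intro a b h
    induction h with
    | single e => exact ha _ _ e
    | tail _ e ih => exact le_trans ih (ha _ _ e)
  -- an edge with equal τ cannot target a write and must be an rt edge between reads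
  have edge : ∀ a b, E a b → τ b ≤ τ a → ¬ isWrite a → rt a b ∧ ¬ isWrite b := by
    intro a b e hle hna
    have hnb : ¬ isWrite b := fun hw => absurd (hb _ _ e hw) (not_lt.2 hle)
    rcases (hE a b).1 e with h | h | h | h
    · exact ⟨h, hnb⟩
    · exact absurd (hwr _ _ h) hna
    · exact absurd (hww _ _ h) hnb
    · exact absurd (hrw _ _ h) hnb
  -- along a path with equal endpoints' τ starting at a read, we get an rt edge
  have key : ∀ a b, Relation.TransGen E a b → τ b ≤ τ a → ¬ isWrite a →
      rt a b ∧ ¬ isWrite b := by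
    intro a b h
    induction h with
    | single e => exact edge _ _ e
    | @tail b c hab e ih =>
      intro hle hna
      have h1 : τ a ≤ τ b := mono _ _ hab
      have h2 : τ b ≤ τ c := ha _ _ e
      obtain ⟨hab', hnb⟩ := ih (le_trans h2 hle) hna
      obtain ⟨hbc, hnc⟩ := edge _ _ e (le_trans hle h1) hnb
      exact ⟨hcTrans a b c hna hnb hnc hab' hbc, hnc⟩
  intro v h
  -- v is not a write: its incoming edge has equal τ
  have hnv : ¬ isWrite v := by
    intro hw
    cases h with
    | single e => exact absurd (hb _ _ e hw) (lt_irrefl _)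
    | @tail b _ hab e =>
      exact absurd (lt_of_le_of_lt (mono _ _ hab) (hb _ _ e hw)) (lt_irrefl _)
  obtain ⟨hrt, -⟩ := key v v h le_rfl hnv
  exact hcIrr v ⟨hrt, hnv⟩
end

section
/- Suppose τ(o₁) ≤ τ(o₂) for every rt-edge, τ(W') = τ(R) for every wr-edge (W', R), τ(W) < τ(W') for every ww-edge (W, W'), and τ(R) < τ(W) for every rw-edge (R, W). If a cycle o₁, …, o_n = o₁ (n > 1) exists in G, then τ(o₁) = τ(o₂) = ⋯ = τ(o_n) and all edges in the cycle are rt-edges between read operations. -/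
/-- Along any cycle of a dependency graph in which `τ` is non-decreasing on `rt`-edges,
constant on `wr`-edges, and strictly increasing on `ww`- and `rw`-edges, all operations
have equal timestamps and every edge of the cycle is an `rt`-edge between reads. -/
theorem stmt_8 {V T : Type*} [LinearOrder T]
    (rt wr ww rw : V → V → Prop) (isWrite : V → Prop)
    (E : V → V → Prop) (hE : ∀ a b, E a b ↔ rt a b ∨ wr a b ∨ ww a b ∨ rw a b)
    (τ : V → T)
    (hrt : ∀ a b, rt a b → τ a ≤ τ b)
    (hwr : ∀ a b, wr a b → τ a = τ b ∧ isWrite a ∧ ¬ isWrite b)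
    (hww : ∀ a b, ww a b → τ a < τ b ∧ isWrite a ∧ isWrite b)
    (hrw : ∀ a b, rw a b → τ a < τ b ∧ ¬ isWrite a ∧ isWrite b)
    (hintoWrite : ∀ a b, E a b → isWrite b → τ a < τ b)
    (n : ℕ) (hn : 1 ≤ n) (o : ℕ → V)
    (hcycle : o n = o 0) (hedges : ∀ i < n, E (o i) (o (i + 1))) :
    (∀ i ≤ n, τ (o i) = τ (o 0)) ∧
      ∀ i < n, rt (o i) (o (i + 1)) ∧ ¬ isWrite (o i) ∧ ¬ isWrite (o (i + 1)) := by
  have hmono : ∀ a b, E a b → τ a ≤ τ b := by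
    intro a b hab
    rcases (hE a b).1 hab with h | h | h | h
    · exact hrt a b h
    · exact le_of_eq (hwr a b h).1
    · exact le_of_lt (hww a b h).1
    · exact le_of_lt (hrw a b h).1
  -- τ (o 0) ≤ τ (o i) for i ≤ n
  have hle : ∀ i ≤ n, τ (o 0) ≤ τ (o i) := by
    intro i
    induction i with
    | zero => intro _; exact le_rfl
    | succ k ih =>
      intro hk
      exact le_trans (ih (le_of_lt (Nat.lt_of_succ_le hk)))
        (hmono _ _ (hedges k (Nat.lt_of_succ_le hk)))
  have hge : ∀ i ≤ n, τ (o i) ≤ τ (o 0) := by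
    intro i hi
    -- τ (o i) ≤ τ (o n) = τ (o 0)
    have : ∀ j, i ≤ j → j ≤ n → τ (o i) ≤ τ (o j) := by
      intro j
      induction j with
      | zero => intro h _; interval_cases i; exact le_rfl
      | succ k ih =>
        intro hij hjn
        rcases Nat.lt_or_ge i (k+1) with h | h
        · exact le_trans (ih (Nat.lt_succ_iff.mp h) (le_of_lt (Nat.lt_of_succ_le hjn)))
            (hmono _ _ (hedges k (Nat.lt_of_succ_le hjn)))
        · have : i = k + 1 := le_antisymm hij h
          subst this; exact le_rfl
    calc τ (o i) ≤ τ (o n) := this n hi le_rfl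
      _ = τ (o 0) := by rw [hcycle]
  have heq : ∀ i ≤ n, τ (o i) = τ (o 0) := fun i hi => le_antisymm (hge i hi) (hle i hi)
  have hnw : ∀ i ≤ n, ¬ isWrite (o i) := by
    -- every o i (i ≤ n) is the target of some edge with equal τ
    have key : ∀ j < n, ¬ isWrite (o (j+1)) := by
      intro j hj hw
      have := hintoWrite _ _ (hedges j hj) hw
      have h1 := heq j (le_of_lt hj)
      have h2 := heq (j+1) hj
      rw [h1, h2] at this
      exact lt_irrefl _ this
    intro i hi
    rcases Nat.eq_zero_or_pos i with h | h
    · subst h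
      have := key (n-1) (Nat.sub_lt (lt_of_lt_of_le one_pos hn) one_pos)
      rwa [Nat.sub_add_cancel hn, hcycle] at this
    · obtain ⟨j, rfl⟩ := Nat.exists_eq_add_of_lt h
      simp only [Nat.zero_add] at *
      exact key j (Nat.lt_of_succ_le hi)
  refine ⟨heq, fun i hi => ?_⟩
  have hnwi := hnw i (le_of_lt hi)
  have hnwi1 := hnw (i+1) hi
  have hτ : τ (o i) = τ (o (i+1)) := by
    rw [heq i (le_of_lt hi), heq (i+1) hi]
  refine ⟨?_, hnwi, hnwi1⟩
  rcases (hE _ _).1 (hedges i hi) with h | h | h | h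
  · exact h
  · exact absurd (hwr _ _ h).2.1 hnwi
  · exact absurd (hww _ _ h).2.1 hnwi
  · exact absurd ((hrw _ _ h).1) (by rw [hτ]; exact lt_irrefl _)
end

section
/- Let ≤ be the associated linearization: a finite set of operations V', each complete operation preceded by only finitely many operations, totally ordered by a topological order π of an acyclic dependency graph satisfying register axioms (wr functional, ww total on visible writes, rw derived). Then the sequential history obtained by ordering V' by π satisfies register semantics: for every read R, the value of R equals the value of the ww-latest write preceding R in π, or the initial value v₀ if no write precedes R. -/
/-- Register semantics of the linearization: ordering the operations of `V'` by a
topological order `π` of an acyclic dependency graph satisfying the register axioms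
yields a sequential history in which every complete read returns the value of the
latest preceding write in `π`, or the initial value `v₀` if no write precedes it. -/
theorem stmt_9 {V Val : Type*} (V' : Set V)
    (isWrite complete vis : V → Prop) (value : V → Val) (v₀ : Val)
    (rt wr ww rw : V → V → Prop) (π : V → ℕ)
    -- axiom (i): wr-edges relate a visible write to a complete read of the same value
    (hwr : ∀ W R, wr W R → isWrite W ∧ ¬ isWrite R ∧ complete R ∧
      value W = value R ∧ vis W)
    -- axiom (ii): wr is functional per read
    (hwrFun : ∀ W₁ W₂ R, wr W₁ R → wr W₂ R → W₁ = W₂)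
    -- axiom (iii): a complete read with no wr-predecessor returns the initial value
    (hinit : ∀ R, ¬ isWrite R → complete R → (¬ ∃ W, wr W R) → value R = v₀)
    -- ww is a strict total order on visible writes
    (hwwDom : ∀ W W', ww W W' → isWrite W ∧ isWrite W' ∧ vis W ∧ vis W')
    (hwwTotal : ∀ W W', isWrite W → isWrite W' → vis W → vis W' → W ≠ W' →
      ww W W' ∨ ww W' W)
    (hwwTrans : ∀ a b c, ww a b → ww b c → ww a c)
    (hwwIrr : ∀ a, ¬ ww a a)
    -- rw is derived from wr and ww
    (hrw : ∀ R W, rw R W ↔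
      (∃ W', wr W' R ∧ ww W' W) ∨
      (¬ isWrite R ∧ isWrite W ∧ vis W ∧ ¬ ∃ W', wr W' R))
    -- V' consists of visible operations, contains all visible writes,
    -- and π is a topological order of the dependency graph on V'
    (hvis : ∀ o ∈ V', vis o)
    (hwriteMem : ∀ W, isWrite W → vis W → W ∈ V')
    (hπInj : Set.InjOn π V')
    (hπtopo : ∀ a b, a ∈ V' → b ∈ V' →
      (rt a b ∨ wr a b ∨ ww a b ∨ rw a b) → π a < π b) :
    ∀ R ∈ V', ¬ isWrite R → complete R →
      ((∀ W ∈ V', isWrite W → π W < π R →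
          (∀ W' ∈ V', isWrite W' → π W' < π R → π W' ≤ π W) →
          value R = value W) ∧
        ((¬ ∃ W ∈ V', isWrite W ∧ π W < π R) → value R = v₀)) := by
  intro R hR hRread hRcomp
  constructor
  · intro W hW hWwrite hWlt hmax
    by_cases hex : ∃ W₀, wr W₀ R
    · obtain ⟨W₀, hW₀⟩ := hex
      obtain ⟨hW₀w, _, _, hval, hW₀vis⟩ := hwr W₀ R hW₀
      have hW₀mem : W₀ ∈ V' := hwriteMem W₀ hW₀w hW₀vis
      have hW₀lt : π W₀ < π R := hπtopo W₀ R hW₀mem hR (Or.inr (Or.inl hW₀))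
      have hWvis : vis W := hvis W hW
      by_cases heq : W = W₀
      · rw [heq]; exact hval.symm
      · rcases hwwTotal W₀ W hW₀w hWwrite hW₀vis hWvis (Ne.symm heq) with h | h
        · have : rw R W := (hrw R W).2 (Or.inl ⟨W₀, hW₀, h⟩)
          have := hπtopo R W hR hW (Or.inr (Or.inr (Or.inr this)))
          omega
        · have : π W < π W₀ := hπtopo W W₀ hW hW₀mem (Or.inr (Or.inr (Or.inl h)))
          have := hmax W₀ hW₀mem hW₀w hW₀lt
          omega
    · -- no wr-predecessor, but a write precedes R: rw edge gives contradiction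
      have hWvis : vis W := hvis W hW
      have : rw R W := (hrw R W).2 (Or.inr ⟨hRread, hWwrite, hWvis, hex⟩)
      have := hπtopo R W hR hW (Or.inr (Or.inr (Or.inr this)))
      omega
  · intro hnone
    apply hinit R hRread hRcomp
    rintro ⟨W₀, hW₀⟩
    obtain ⟨hW₀w, _, _, _, hW₀vis⟩ := hwr W₀ R hW₀
    have hW₀mem : W₀ ∈ V' := hwriteMem W₀ hW₀w hW₀vis
    have hW₀lt : π W₀ < π R := hπtopo W₀ R hW₀mem hR (Or.inr (Or.inl hW₀))
    exact hnone ⟨W₀, hW₀mem, hW₀w, hW₀lt⟩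
end
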